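/- Let f : ℝ → X be bounded and continuous and define u(t) := ∫_ℝ G(t,τ) f(τ) dτ. Then u is a bounded mild solution on the whole line, i.e. u(t) = U(t,s) u(s) + ∫_s^t U(t,τ) f(τ) dτ for all s ≤ t. -/

import Mathlib

open MeasureTheory Real Filter Bornology

/-- An evolution family on a Banach space `X` together with an exponential dichotomy:
projections `P t`, the inverses `V s t` of the restrictions of `U t s` to the kernels
of the projections (i.e. `V s t = U_Q(s,t)` for `s ≤ t`), dichotomy constants `N, β`
and a bound `H` on the norms of the projections. -/
structure EvolutionDichotomy (X : Type*) [NormedAddCommGroup X] [NormedSpace ℝ X] where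
  U : ℝ → ℝ → X →L[ℝ] X
  P : ℝ → X →L[ℝ] X
  V : ℝ → ℝ → X →L[ℝ] X
  N : ℝ
  β : ℝ
  H : ℝ
  N_pos : 0 < N
  β_pos : 0 < β
  U_id : ∀ s, U s s = ContinuousLinearMap.id ℝ X
  U_comp : ∀ ⦃s r t : ℝ⦄, s ≤ r → r ≤ t → ∀ x, U t r (U r s x) = U t s x
  U_cont : ∀ x : X, ContinuousOn (fun p : ℝ × ℝ => U p.1 p.2 x) {p : ℝ × ℝ | p.2 ≤ p.1}
  P_proj : ∀ t x, P t (P t x) = P t x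
  P_cont : ∀ x : X, Continuous fun t => P t x
  P_bound : ∀ t, ‖P t‖ ≤ H
  comm : ∀ ⦃s t : ℝ⦄, s ≤ t → ∀ x, P t (U t s x) = U t s (P s x)
  V_mapsTo : ∀ ⦃s t : ℝ⦄, s ≤ t → ∀ x, P s (V s t (x - P t x)) = 0
  V_left : ∀ ⦃s t : ℝ⦄, s ≤ t → ∀ x, V s t (U t s (x - P s x)) = x - P s x
  V_right : ∀ ⦃s t : ℝ⦄, s ≤ t → ∀ x, U t s (V s t (x - P t x)) = x - P t x
  P_decay : ∀ ⦃s t : ℝ⦄, s ≤ t → ∀ x, ‖U t s (P s x)‖ ≤ N * Real.exp (-β * (t - s)) * ‖x‖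
  Q_decay : ∀ ⦃s t : ℝ⦄, s ≤ t → ∀ x, ‖V s t (x - P t x)‖ ≤ N * Real.exp (-β * (t - s)) * ‖x‖

namespace EvolutionDichotomy

variable {X : Type*} [NormedAddCommGroup X] [NormedSpace ℝ X]

/-- The complementary projection `Q t = Id - P t`. -/
noncomputable def Q (E : EvolutionDichotomy X) (t : ℝ) : X →L[ℝ] X :=
  ContinuousLinearMap.id ℝ X - E.P t

/-- The Green function of the dichotomy: `G t s = P t ∘ U t s` for `t > s` and
`G t s = -(U_Q(t,s) ∘ Q s)` for `t ≤ s`. -/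
noncomputable def G (E : EvolutionDichotomy X) (t s : ℝ) : X →L[ℝ] X :=
  if s < t then (E.P t).comp (E.U t s) else -((E.V t s).comp (E.Q s))

/-- The Green function is exponentially almost periodic. -/
def ExpAP (E : EvolutionDichotomy X) : Prop :=
  ∀ η > (0:ℝ), ∀ ε > (0:ℝ), ∃ γ > (0:ℝ), ∃ l > (0:ℝ), ∀ a : ℝ,
    ∃ T ∈ Set.Icc a (a + l), ∀ t s : ℝ, η ≤ |t - s| →
      ‖E.G (t + T) (s + T) - E.G t s‖ ≤ ε * Real.exp (-γ * |t - s|)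

end EvolutionDichotomy

/-- A bounded continuous function `f : ℝ → X` is (Bohr) almost periodic if for every `ε > 0`
there is `l > 0` such that every interval of length `l` contains an `ε`-almost period. -/
def AlmostPeriodic {X : Type*} [NormedAddCommGroup X] (f : ℝ → X) : Prop :=
  Continuous f ∧ Bornology.IsBounded (Set.range f) ∧
  ∀ ε > (0:ℝ), ∃ l > (0:ℝ), ∀ a : ℝ, ∃ T ∈ Set.Icc a (a + l),
    ∀ t : ℝ, ‖f (t + T) - f t‖ < ε

/-- A function on `[0,∞)` is asymptotically almost periodic if it is the sum of an almost
periodic function and a continuous function vanishing at infinity. -/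
def AsympAlmostPeriodic {X : Type*} [NormedAddCommGroup X] (g : ℝ → X) : Prop :=
  ∃ h φ : ℝ → X, AlmostPeriodic h ∧ ContinuousOn φ (Set.Ici 0) ∧
    Filter.Tendsto (fun t => ‖φ t‖) Filter.atTop (nhds 0) ∧
    ∀ t : ℝ, 0 ≤ t → g t = h t + φ t

/-- `PAP0`: bounded continuous functions with vanishing mean value. -/
def PAP0 {X : Type*} [NormedAddCommGroup X] (φ : ℝ → X) : Prop :=
  Continuous φ ∧ Bornology.IsBounded (Set.range φ) ∧
  Filter.Tendsto (fun r : ℝ => (1 / (2 * r)) * ∫ t in (-r)..r, ‖φ t‖)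
    Filter.atTop (nhds 0)

/-- A bounded continuous function is pseudo almost periodic if it is the sum of an almost
periodic function and a `PAP0` function. -/
def PseudoAP {X : Type*} [NormedAddCommGroup X] (f : ℝ → X) : Prop :=
  ∃ g φ : ℝ → X, AlmostPeriodic g ∧ PAP0 φ ∧ ∀ t : ℝ, f t = g t + φ t

/-!
For `s ≤ t` the invariance of the splitting gives the pointwise identity
`G(t,τ) - U(t,s) G(s,τ) = 𝟙_{[s,t)}(τ) U(t,τ)`, and integrating it against `f` is the claim.
The integrals exist because `‖G(t,τ)‖ ≤ N e^{-β|t-τ|}`. For measurability, note that on each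
side of `t` the operators `K τ = U(t,τ) P(τ)` resp. `V(t,τ) Q(τ)` are bounded by `N` and satisfy
`K a = K b ∘ U(b,a)` for `a ≤ b`; this makes `τ ↦ K τ (f τ)` continuous, using only the
strong continuity of `U` at the diagonal.
-/

open Topology

lemma integrable_exp_neg_mul_abs_sub {b : ℝ} (hb : 0 < b) (t : ℝ) :
    Integrable fun τ : ℝ => Real.exp (-b * |t - τ|) := by
  suffices Integrable fun x : ℝ => Real.exp (-b * |x|) from this.comp_sub_left t
  have hIic : IntegrableOn (fun x : ℝ => Real.exp (-b * |x|)) (Set.Iic 0) :=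
    (integrableOn_exp_mul_Iic hb 0).congr_fun
      (fun x hx => by rw [abs_of_nonpos hx, mul_neg, neg_mul, neg_neg]) measurableSet_Iic
  have hIoi : IntegrableOn (fun x : ℝ => Real.exp (-b * |x|)) (Set.Ioi 0) :=
    (exp_neg_integrableOn_Ioi 0 hb).congr_fun
      (fun x hx => by rw [abs_of_pos (Set.mem_Ioi.mp hx)]) measurableSet_Ioi
  rw [← integrableOn_univ, ← Set.Iic_union_Ioi (a := (0 : ℝ))]
  exact hIic.union hIoi

namespace EvolutionDichotomy

variable {X : Type*} [NormedAddCommGroup X] [NormedSpace ℝ X] (E : EvolutionDichotomy X)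

lemma Q_apply (t : ℝ) (x : X) : E.Q t x = x - E.P t x := rfl

lemma Q_U_apply {s t : ℝ} (h : s ≤ t) (x : X) : E.Q t (E.U t s x) = E.U t s (E.Q s x) := by
  rw [Q_apply, Q_apply, map_sub, E.comm h]

lemma N_mul_exp_mul_le {s t : ℝ} (h : s ≤ t) (c : ℝ) (hc : 0 ≤ c) :
    E.N * Real.exp (-E.β * (t - s)) * c ≤ E.N * c := by
  have hexp : Real.exp (-E.β * (t - s)) ≤ 1 :=
    Real.exp_le_one_iff.mpr (by nlinarith [E.β_pos])
  calc E.N * Real.exp (-E.β * (t - s)) * c ≤ E.N * 1 * c := by gcongr; exact E.N_pos.le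
    _ = E.N * c := by rw [mul_one]

lemma norm_U_P_apply_le {s t : ℝ} (h : s ≤ t) (x : X) : ‖E.U t s (E.P s x)‖ ≤ E.N * ‖x‖ :=
  (E.P_decay h x).trans (E.N_mul_exp_mul_le h _ (norm_nonneg x))

lemma norm_V_Q_apply_le {s t : ℝ} (h : s ≤ t) (x : X) : ‖E.V s t (E.Q t x)‖ ≤ E.N * ‖x‖ :=
  (E.Q_decay h x).trans (E.N_mul_exp_mul_le h _ (norm_nonneg x))

lemma P_V_Q_apply {s t : ℝ} (h : s ≤ t) (x : X) : E.P s (E.V s t (E.Q t x)) = 0 :=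
  E.V_mapsTo h x

lemma U_V_Q_apply_self {s t : ℝ} (h : s ≤ t) (x : X) :
    E.U t s (E.V s t (E.Q t x)) = E.Q t x :=
  E.V_right h x

lemma V_Q_apply_eq_of_U_apply {s t : ℝ} (h : s ≤ t) {w : X} (x : X) (hP : E.P s w = 0)
    (hU : E.U t s w = E.Q t x) : E.V s t (E.Q t x) = w := by
  have hleft := E.V_left h w
  rwa [hP, sub_zero, hU] at hleft

lemma U_V_Q_apply {s r t : ℝ} (hsr : s ≤ r) (hrt : r ≤ t) (x : X) :
    E.U r s (E.V s t (E.Q t x)) = E.V r t (E.Q t x) := by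
  refine (E.V_Q_apply_eq_of_U_apply hrt x ?_ ?_).symm
  · rw [E.comm hsr, E.P_V_Q_apply (hsr.trans hrt), map_zero]
  · rw [E.U_comp hsr hrt, E.U_V_Q_apply_self (hsr.trans hrt)]

lemma U_P_apply_eq_U_P_U {a b t : ℝ} (hab : a ≤ b) (hbt : b ≤ t) (z : X) :
    E.U t a (E.P a z) = E.U t b (E.P b (E.U b a z)) := by
  rw [E.comm hab, E.U_comp hab hbt]

lemma V_Q_apply_eq_V_Q_U {t a b : ℝ} (hta : t ≤ a) (hab : a ≤ b) (z : X) :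
    E.V t a (E.Q a z) = E.V t b (E.Q b (E.U b a z)) := by
  refine (E.V_Q_apply_eq_of_U_apply (hta.trans hab) _ (E.P_V_Q_apply hta z) ?_).symm
  rw [← E.U_comp hta hab, E.U_V_Q_apply_self hta, E.Q_U_apply hab]

lemma G_apply_of_lt {t τ : ℝ} (h : τ < t) (x : X) : E.G t τ x = E.U t τ (E.P τ x) := by
  rw [G, if_pos h, ContinuousLinearMap.comp_apply, E.comm h.le]

lemma G_apply_of_le {t τ : ℝ} (h : t ≤ τ) (x : X) : E.G t τ x = -E.V t τ (E.Q τ x) := by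
  rw [G, if_neg h.not_gt, neg_apply, ContinuousLinearMap.comp_apply]

lemma norm_G_apply_le (t τ : ℝ) (x : X) :
    ‖E.G t τ x‖ ≤ E.N * Real.exp (-E.β * |t - τ|) * ‖x‖ := by
  rcases lt_or_ge τ t with h | h
  · rw [E.G_apply_of_lt h, abs_of_pos (sub_pos.mpr h)]
    exact E.P_decay h.le x
  · rw [E.G_apply_of_le h, norm_neg, abs_sub_comm, abs_of_nonneg (sub_nonneg.mpr h)]
    exact E.Q_decay h x

lemma G_sub_U_G_apply {s t : ℝ} (hst : s ≤ t) (f : ℝ → X) (τ : ℝ) :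
    E.G t τ (f τ) - E.U t s (E.G s τ (f τ)) =
      (Set.Ico s t).indicator (fun r => E.U t r (f r)) τ := by
  rcases lt_or_ge τ s with hτs | hsτ
  · rw [Set.indicator_of_notMem (fun hτ => hτs.not_ge hτ.1), E.G_apply_of_lt (hτs.trans_le hst),
      E.G_apply_of_lt hτs, E.U_comp hτs.le hst, sub_self]
  rcases lt_or_ge τ t with hτt | htτ
  · have hQ : E.U t s (E.V s τ (E.Q τ (f τ))) = E.U t τ (E.Q τ (f τ)) := by
      rw [← E.U_comp hsτ hτt.le, E.U_V_Q_apply_self hsτ]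
    rw [Set.indicator_of_mem (Set.mem_Ico.mpr ⟨hsτ, hτt⟩), E.G_apply_of_lt hτt,
      E.G_apply_of_le hsτ, map_neg, sub_neg_eq_add, hQ, ← map_add, Q_apply, add_sub_cancel]
  · rw [Set.indicator_of_notMem (fun hτ => hτ.2.not_ge htτ), E.G_apply_of_le htτ,
      E.G_apply_of_le (hst.trans htτ), map_neg, E.U_V_Q_apply hst htτ, sub_neg_eq_add,
      neg_add_cancel]

lemma tendsto_U_max_min (τ₀ : ℝ) (z : X) :
    Tendsto (fun τ => E.U (max τ τ₀) (min τ τ₀) z) (𝓝 τ₀) (𝓝 z) := by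
  have hpair : Tendsto (fun τ : ℝ => (max τ τ₀, min τ τ₀)) (𝓝 τ₀)
      (𝓝[{p : ℝ × ℝ | p.2 ≤ p.1}] (τ₀, τ₀)) := by
    refine tendsto_nhdsWithin_of_tendsto_nhds_of_eventually_within _ ?_
      (Eventually.of_forall fun τ => show min τ τ₀ ≤ max τ τ₀ from min_le_max)
    have hcont : Continuous fun τ : ℝ => (max τ τ₀, min τ τ₀) := by fun_prop
    simpa using hcont.tendsto τ₀
  simpa [Function.comp_def, E.U_id] using (E.U_cont z (τ₀, τ₀) (le_refl τ₀)).tendsto.comp hpair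

section FactorThroughU

variable {S : Set ℝ} {K : ℝ → X →L[ℝ] X} {C : ℝ}

lemma norm_apply_sub_apply_le_of_factor_U (hK : ∀ τ ∈ S, ∀ x, ‖K τ x‖ ≤ C * ‖x‖)
    (hKU : ∀ a ∈ S, ∀ b ∈ S, a ≤ b → ∀ z, K a z = K b (E.U b a z))
    {a b : ℝ} (ha : a ∈ S) (hb : b ∈ S) (z : X) :
    ‖K a z - K b z‖ ≤ C * ‖E.U (max a b) (min a b) z - z‖ := by
  rcases le_total a b with hab | hba
  · rw [max_eq_right hab, min_eq_left hab, hKU a ha b hb hab, ← map_sub]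
    exact hK b hb _
  · rw [max_eq_left hba, min_eq_right hba, hKU b hb a ha hba, ← map_sub, norm_sub_rev]
    exact hK a ha _

lemma continuousOn_apply_of_factor_U (hK : ∀ τ ∈ S, ∀ x, ‖K τ x‖ ≤ C * ‖x‖)
    (hKU : ∀ a ∈ S, ∀ b ∈ S, a ≤ b → ∀ z, K a z = K b (E.U b a z))
    {f : ℝ → X} (hf : Continuous f) : ContinuousOn (fun τ => K τ (f τ)) S := by
  intro τ₀ hτ₀
  rw [ContinuousWithinAt, tendsto_iff_norm_sub_tendsto_zero]
  have hbound : ∀ τ ∈ S, ‖K τ (f τ) - K τ₀ (f τ₀)‖ ≤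
      C * ‖f τ - f τ₀‖ + C * ‖E.U (max τ τ₀) (min τ τ₀) (f τ₀) - f τ₀‖ := fun τ hτ =>
    calc ‖K τ (f τ) - K τ₀ (f τ₀)‖
        ≤ ‖K τ (f τ) - K τ (f τ₀)‖ + ‖K τ (f τ₀) - K τ₀ (f τ₀)‖ :=
          norm_sub_le_norm_sub_add_norm_sub _ _ _
      _ ≤ _ := by
        rw [← map_sub]
        exact add_le_add (hK τ hτ _)
          (E.norm_apply_sub_apply_le_of_factor_U hK hKU hτ hτ₀ _)
  have hlim : Tendsto (fun τ => C * ‖f τ - f τ₀‖ + C * ‖E.U (max τ τ₀) (min τ τ₀) (f τ₀) - f τ₀‖)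
      (𝓝 τ₀) (𝓝 0) := by
    simpa using ((tendsto_iff_norm_sub_tendsto_zero.mp (hf.tendsto τ₀)).const_mul C).add
      ((tendsto_iff_norm_sub_tendsto_zero.mp (E.tendsto_U_max_min τ₀ (f τ₀))).const_mul C)
  exact squeeze_zero' (Eventually.of_forall fun _ => norm_nonneg _)
    (eventually_nhdsWithin_of_forall hbound) (hlim.mono_left nhdsWithin_le_nhds)

end FactorThroughU

lemma continuousOn_U_P_apply {f : ℝ → X} (hf : Continuous f) (t : ℝ) :
    ContinuousOn (fun τ => E.U t τ (E.P τ (f τ))) (Set.Iic t) :=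
  E.continuousOn_apply_of_factor_U (K := fun τ => (E.U t τ).comp (E.P τ))
    (fun _ hτ x => E.norm_U_P_apply_le hτ x)
    (fun _ _ _ hb hab z => E.U_P_apply_eq_U_P_U hab hb z) hf

lemma continuousOn_V_Q_apply {f : ℝ → X} (hf : Continuous f) (t : ℝ) :
    ContinuousOn (fun τ => E.V t τ (E.Q τ (f τ))) (Set.Ici t) :=
  E.continuousOn_apply_of_factor_U (K := fun τ => (E.V t τ).comp (E.Q τ))
    (fun _ hτ x => E.norm_V_Q_apply_le hτ x)
    (fun _ ha _ _ hab z => E.V_Q_apply_eq_V_Q_U ha hab z) hf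

lemma aestronglyMeasurable_G_apply {f : ℝ → X} (hf : Continuous f) (t : ℝ) :
    AEStronglyMeasurable fun τ => E.G t τ (f τ) := by
  have hpiece : (fun τ => E.G t τ (f τ)) =
      (Set.Iio t).piecewise (fun τ => E.U t τ (E.P τ (f τ))) fun τ => -E.V t τ (E.Q τ (f τ)) := by
    funext τ
    rcases lt_or_ge τ t with h | h
    · rw [Set.piecewise_eq_of_mem (Set.Iio t) _ _ h, E.G_apply_of_lt h]
    · rw [Set.piecewise_eq_of_notMem (Set.Iio t) _ _ h.not_gt, E.G_apply_of_le h]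
  rw [hpiece]
  refine .piecewise measurableSet_Iio ?_ ?_
  · exact ((E.continuousOn_U_P_apply hf t).mono Set.Iio_subset_Iic_self).aestronglyMeasurable
      measurableSet_Iio
  · rw [Set.compl_Iio]
    exact (E.continuousOn_V_Q_apply hf t).neg.aestronglyMeasurable measurableSet_Ici

lemma integrable_G_apply {f : ℝ → X} (hfc : Continuous f) (hfb : IsBounded (Set.range f))
    (t : ℝ) : Integrable fun τ => E.G t τ (f τ) := by
  obtain ⟨C, hC⟩ := isBounded_iff_forall_norm_le.mp hfb
  refine ((integrable_exp_neg_mul_abs_sub E.β_pos t).const_mul (E.N * C)).mono'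
    (E.aestronglyMeasurable_G_apply hfc t) (Eventually.of_forall fun τ => ?_)
  calc ‖E.G t τ (f τ)‖ ≤ E.N * Real.exp (-E.β * |t - τ|) * ‖f τ‖ := E.norm_G_apply_le t τ (f τ)
    _ ≤ E.N * Real.exp (-E.β * |t - τ|) * C := by
      gcongr
      · exact mul_nonneg E.N_pos.le (Real.exp_pos _).le
      · exact hC _ (Set.mem_range_self τ)
    _ = E.N * C * Real.exp (-E.β * |t - τ|) := by ring

end EvolutionDichotomy

/-- for bounded continuous `f`, the function
`u(t) = ∫_ℝ G(t,τ) f(τ) dτ` is a mild solution on the whole line: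
`u(t) = U(t,s) u(s) + ∫_s^t U(t,τ) f(τ) dτ` for all `s ≤ t`. -/
theorem green_convolution_is_mild_solution
    {X : Type*} [NormedAddCommGroup X] [NormedSpace ℝ X] [CompleteSpace X]
    (E : EvolutionDichotomy X) (f : ℝ → X)
    (hfc : Continuous f) (hfb : Bornology.IsBounded (Set.range f)) :
    ∀ s t : ℝ, s ≤ t →
      (∫ τ : ℝ, E.G t τ (f τ)) =
        E.U t s (∫ τ : ℝ, E.G s τ (f τ)) + ∫ τ in s..t, E.U t τ (f τ) := by
  intro s t hst
  have hs := E.integrable_G_apply hfc hfb s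
  have ht := E.integrable_G_apply hfc hfb t
  have hdiff : (∫ τ, E.G t τ (f τ)) - ∫ τ, E.U t s (E.G s τ (f τ)) =
      ∫ τ in s..t, E.U t τ (f τ) := by
    rw [← integral_sub ht ((E.U t s).integrable_comp hs)]
    simp_rw [E.G_sub_U_G_apply hst f]
    rw [integral_indicator measurableSet_Ico, integral_Ico_eq_integral_Ioc,
      intervalIntegral.integral_of_le hst]
  rw [← (E.U t s).integral_comp_comm hs, ← hdiff, add_sub_cancel]
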